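/- arXiv:2212.07667 — 4 statements merged into one kernel-verified Lean document; each statement's English description precedes it below -/
import Mathlib

section
/- Let F be a field of characteristic not 2 and let ϖ ∈ F× be such that none of −1, ϖ, −ϖ is a square in F. Let H be the subgroup of GL₂(F) generated by the nonzero scalar matrices, the matrix diag(1, −1), and the matrix [[0, −1], [ϖ, 0]]. Then H ∩ SL₂(F) = {I, −I}. -/
open Matrix

section Aux
variable {F : Type*} [Field F]

private lemma auxDD (_ϖ : F) :
    (!![1,0;0,-1] : Matrix (Fin 2) (Fin 2) F) * !![1,0;0,-1] = 1 := by
  ext i j; fin_cases i <;> fin_cases j <;>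
    simp [Matrix.mul_apply, Fin.sum_univ_two, Matrix.one_apply]

private lemma auxDW (ϖ : F) :
    (!![1,0;0,-1] : Matrix (Fin 2) (Fin 2) F) * !![0,-1;ϖ,0] = !![0,-1;-ϖ,0] := by
  ext i j; fin_cases i <;> fin_cases j <;> simp [Matrix.mul_apply, Fin.sum_univ_two]

private lemma auxDP (ϖ : F) :
    (!![1,0;0,-1] : Matrix (Fin 2) (Fin 2) F) * !![0,-1;-ϖ,0] = !![0,-1;ϖ,0] := by
  ext i j; fin_cases i <;> fin_cases j <;> simp [Matrix.mul_apply, Fin.sum_univ_two]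

private lemma auxWD (ϖ : F) :
    (!![0,-1;ϖ,0] : Matrix (Fin 2) (Fin 2) F) * !![1,0;0,-1] = (-1 : F) • !![0,-1;-ϖ,0] := by
  ext i j; fin_cases i <;> fin_cases j <;> simp [Matrix.mul_apply, Fin.sum_univ_two]

private lemma auxWW (ϖ : F) :
    (!![0,-1;ϖ,0] : Matrix (Fin 2) (Fin 2) F) * !![0,-1;ϖ,0] = (-ϖ) • 1 := by
  ext i j; fin_cases i <;> fin_cases j <;>
    simp [Matrix.mul_apply, Fin.sum_univ_two, Matrix.one_apply]

private lemma auxWP (ϖ : F) :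
    (!![0,-1;ϖ,0] : Matrix (Fin 2) (Fin 2) F) * !![0,-1;-ϖ,0] = ϖ • !![1,0;0,-1] := by
  ext i j; fin_cases i <;> fin_cases j <;> simp [Matrix.mul_apply, Fin.sum_univ_two]

private lemma auxPD (ϖ : F) :
    (!![0,-1;-ϖ,0] : Matrix (Fin 2) (Fin 2) F) * !![1,0;0,-1] = (-1 : F) • !![0,-1;ϖ,0] := by
  ext i j; fin_cases i <;> fin_cases j <;> simp [Matrix.mul_apply, Fin.sum_univ_two]

private lemma auxPW (ϖ : F) :
    (!![0,-1;-ϖ,0] : Matrix (Fin 2) (Fin 2) F) * !![0,-1;ϖ,0] = (-ϖ) • !![1,0;0,-1] := by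
  ext i j; fin_cases i <;> fin_cases j <;> simp [Matrix.mul_apply, Fin.sum_univ_two]

private lemma auxPP (ϖ : F) :
    (!![0,-1;-ϖ,0] : Matrix (Fin 2) (Fin 2) F) * !![0,-1;-ϖ,0] = ϖ • 1 := by
  ext i j; fin_cases i <;> fin_cases j <;>
    simp [Matrix.mul_apply, Fin.sum_univ_two, Matrix.one_apply]

private lemma smul_mul_smul' (a b : F) (X Y : Matrix (Fin 2) (Fin 2) F) :
    (a • X) * (b • Y) = (a * b) • (X * Y) := by
  rw [Matrix.smul_mul, Matrix.mul_smul, smul_smul]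

end Aux

/-- If none of `−1`, `ϖ`, `−ϖ` is a square in a field `F` of
characteristic ≠ 2, then the subgroup of `GL₂(F)` generated by nonzero scalar matrices,
`diag(1,−1)` and `[[0,−1],[ϖ,0]]` meets `SL₂(F)` exactly in `{I, −I}`. -/
theorem stmt3 {F : Type*} [Field F] (h2 : (2 : F) ≠ 0) (ϖ : F) (hϖ : ϖ ≠ 0)
    (hn1 : ¬∃ x : F, x ^ 2 = -1)
    (hnϖ : ¬∃ x : F, x ^ 2 = ϖ)
    (hnnϖ : ¬∃ x : F, x ^ 2 = -ϖ)
    (H : Subgroup (GL (Fin 2) F))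
    (hH : H = Subgroup.closure
      ({g : GL (Fin 2) F | ∃ a : F, a ≠ 0 ∧ (g : Matrix (Fin 2) (Fin 2) F) = a • (1 : Matrix (Fin 2) (Fin 2) F)}
        ∪ {g : GL (Fin 2) F | (g : Matrix (Fin 2) (Fin 2) F) = !![1, 0; 0, -1]}
        ∪ {g : GL (Fin 2) F | (g : Matrix (Fin 2) (Fin 2) F) = !![0, -1; ϖ, 0]})) :
    {g : GL (Fin 2) F | g ∈ H ∧ (g : Matrix (Fin 2) (Fin 2) F).det = 1}
      = {g : GL (Fin 2) F | (g : Matrix (Fin 2) (Fin 2) F) = 1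
          ∨ (g : Matrix (Fin 2) (Fin 2) F) = -1} := by
  subst hH
  set D : Matrix (Fin 2) (Fin 2) F := !![1,0;0,-1] with hD
  set W : Matrix (Fin 2) (Fin 2) F := !![0,-1;ϖ,0] with hW
  set P : Matrix (Fin 2) (Fin 2) F := !![0,-1;-ϖ,0] with hP
  -- The subgroup K
  have inv_coe : ∀ (g : GL (Fin 2) F) (M : Matrix (Fin 2) (Fin 2) F),
      (g : Matrix (Fin 2) (Fin 2) F) * M = 1 → ((g⁻¹ : GL (Fin 2) F) : Matrix (Fin 2) (Fin 2) F) = M := by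
    intro g M hgM
    have : (g : Matrix (Fin 2) (Fin 2) F)⁻¹ = M := Matrix.inv_eq_right_inv hgM
    rw [Matrix.coe_units_inv, this]
  let K : Subgroup (GL (Fin 2) F) :=
  { carrier := {g | ∃ a : F, a ≠ 0 ∧
      ((g : Matrix (Fin 2) (Fin 2) F) = a • 1 ∨ (g : Matrix (Fin 2) (Fin 2) F) = a • D ∨
       (g : Matrix (Fin 2) (Fin 2) F) = a • W ∨ (g : Matrix (Fin 2) (Fin 2) F) = a • P)}
    one_mem' := ⟨1, one_ne_zero, Or.inl (by simp)⟩
    mul_mem' := by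
      rintro g h ⟨a, ha, hg⟩ ⟨b, hb, hh⟩
      have hcoe : ((g * h : GL (Fin 2) F) : Matrix (Fin 2) (Fin 2) F)
          = (g : Matrix (Fin 2) (Fin 2) F) * (h : Matrix (Fin 2) (Fin 2) F) := rfl
      have hab : a * b ≠ 0 := mul_ne_zero ha hb
      rcases hg with hg | hg | hg | hg <;> rcases hh with hh | hh | hh | hh <;>
        rw [Set.mem_setOf_eq, hcoe, hg, hh, smul_mul_smul']
      · exact ⟨a*b, hab, Or.inl (by rw [one_mul])⟩
      · exact ⟨a*b, hab, Or.inr (Or.inl (by rw [one_mul]))⟩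
      · exact ⟨a*b, hab, Or.inr (Or.inr (Or.inl (by rw [one_mul])))⟩
      · exact ⟨a*b, hab, Or.inr (Or.inr (Or.inr (by rw [one_mul])))⟩
      · exact ⟨a*b, hab, Or.inr (Or.inl (by rw [mul_one]))⟩
      · exact ⟨a*b, hab, Or.inl (by rw [hD, auxDD ϖ])⟩
      · exact ⟨a*b, hab, Or.inr (Or.inr (Or.inr (by rw [hD, hW, auxDW ϖ, hP])))⟩
      · exact ⟨a*b, hab, Or.inr (Or.inr (Or.inl (by rw [hD, hP, auxDP ϖ, hW])))⟩
      · exact ⟨a*b, hab, Or.inr (Or.inr (Or.inl (by rw [mul_one])))⟩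
      · exact ⟨-(a*b), neg_ne_zero.mpr hab,
          Or.inr (Or.inr (Or.inr (by rw [hW, hD, auxWD ϖ, smul_smul, ← hP]; ring_nf)))⟩
      · exact ⟨a*b*(-ϖ), mul_ne_zero hab (neg_ne_zero.mpr hϖ),
          Or.inl (by rw [hW, auxWW ϖ, smul_smul])⟩
      · exact ⟨a*b*ϖ, mul_ne_zero hab hϖ,
          Or.inr (Or.inl (by rw [hW, hP, auxWP ϖ, smul_smul, ← hD]))⟩
      · exact ⟨a*b, hab, Or.inr (Or.inr (Or.inr (by rw [mul_one])))⟩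
      · exact ⟨-(a*b), neg_ne_zero.mpr hab,
          Or.inr (Or.inr (Or.inl (by rw [hP, hD, auxPD ϖ, smul_smul, ← hW]; ring_nf)))⟩
      · exact ⟨a*b*(-ϖ), mul_ne_zero hab (neg_ne_zero.mpr hϖ),
          Or.inr (Or.inl (by rw [hP, hW, auxPW ϖ, smul_smul, ← hD]))⟩
      · exact ⟨a*b*ϖ, mul_ne_zero hab hϖ,
          Or.inl (by rw [hP, auxPP ϖ, smul_smul])⟩
    inv_mem' := by
      rintro g ⟨a, ha, hg⟩
      rcases hg with hg | hg | hg | hg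
      · refine ⟨a⁻¹, inv_ne_zero ha, Or.inl (inv_coe g _ ?_)⟩
        rw [hg, smul_mul_smul', one_mul, mul_inv_cancel₀ ha, one_smul]
      · refine ⟨a⁻¹, inv_ne_zero ha, Or.inr (Or.inl (inv_coe g _ ?_))⟩
        rw [hg, smul_mul_smul', mul_inv_cancel₀ ha, one_smul, hD, auxDD ϖ]
      · refine ⟨(a*(-ϖ))⁻¹, inv_ne_zero (mul_ne_zero ha (neg_ne_zero.mpr hϖ)),
          Or.inr (Or.inr (Or.inl (inv_coe g _ ?_)))⟩
        rw [hg, smul_mul_smul', hW, auxWW ϖ, smul_smul]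
        rw [show a * (a * -ϖ)⁻¹ * -ϖ = (a * -ϖ) * (a * -ϖ)⁻¹ by ring,
          mul_inv_cancel₀ (mul_ne_zero ha (neg_ne_zero.mpr hϖ)), one_smul]
      · refine ⟨(a*ϖ)⁻¹, inv_ne_zero (mul_ne_zero ha hϖ),
          Or.inr (Or.inr (Or.inr (inv_coe g _ ?_)))⟩
        rw [hg, smul_mul_smul', hP, auxPP ϖ, smul_smul]
        rw [show a * (a * ϖ)⁻¹ * ϖ = (a * ϖ) * (a * ϖ)⁻¹ by ring,
          mul_inv_cancel₀ (mul_ne_zero ha hϖ), one_smul]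
  }
  have hKle : Subgroup.closure
      ({g : GL (Fin 2) F | ∃ a : F, a ≠ 0 ∧ (g : Matrix (Fin 2) (Fin 2) F) = a • (1 : Matrix (Fin 2) (Fin 2) F)}
        ∪ {g : GL (Fin 2) F | (g : Matrix (Fin 2) (Fin 2) F) = !![1, 0; 0, -1]}
        ∪ {g : GL (Fin 2) F | (g : Matrix (Fin 2) (Fin 2) F) = !![0, -1; ϖ, 0]}) ≤ K := by
    rw [Subgroup.closure_le]
    rintro g ((⟨a, ha, hg⟩ | hg) | hg)
    · exact ⟨a, ha, Or.inl hg⟩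
    · exact ⟨1, one_ne_zero, Or.inr (Or.inl (by rw [hg, one_smul, hD]))⟩
    · exact ⟨1, one_ne_zero, Or.inr (Or.inr (Or.inl (by rw [hg, one_smul, hW])))⟩
  have detD : D.det = -1 := by rw [hD]; simp [Matrix.det_fin_two_of]
  have detW : W.det = ϖ := by rw [hW]; simp [Matrix.det_fin_two_of]
  have detP : P.det = -ϖ := by rw [hP]; simp [Matrix.det_fin_two_of]
  have detsmul : ∀ (a : F) (M : Matrix (Fin 2) (Fin 2) F), (a • M).det = a ^ 2 * M.det := by
    intro a M; rw [Matrix.det_smul]; norm_num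
  ext g
  simp only [Set.mem_setOf_eq]
  constructor
  · rintro ⟨hgH, hdet⟩
    obtain ⟨a, ha, hg⟩ := hKle hgH
    rcases hg with hg | hg | hg | hg
    · rw [hg, detsmul, Matrix.det_one, mul_one] at hdet
      have h1 : (a - 1) * (a + 1) = 0 := by linear_combination hdet
      rcases mul_eq_zero.mp h1 with h1 | h1
      · exact Or.inl (by rw [hg, sub_eq_zero.mp h1, one_smul])
      · exact Or.inr (by rw [hg, eq_neg_of_add_eq_zero_left h1, neg_smul, one_smul])
    · rw [hg, detsmul, detD] at hdet
      exact absurd ⟨a, by linear_combination -hdet⟩ hn1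
    · rw [hg, detsmul, detW] at hdet
      refine absurd ⟨a⁻¹, ?_⟩ hnϖ
      rw [inv_pow]
      rw [eq_inv_of_mul_eq_one_right hdet]
    · rw [hg, detsmul, detP] at hdet
      refine absurd ⟨a⁻¹, ?_⟩ hnnϖ
      rw [inv_pow]
      rw [eq_inv_of_mul_eq_one_right hdet]
  · rintro (hg | hg)
    · refine ⟨Subgroup.subset_closure (Or.inl (Or.inl ⟨1, one_ne_zero, by rw [hg, one_smul]⟩)), ?_⟩
      rw [hg, Matrix.det_one]
    · refine ⟨Subgroup.subset_closure (Or.inl (Or.inl ⟨-1, neg_ne_zero.mpr one_ne_zero,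
        by rw [hg, neg_smul, one_smul]⟩)), ?_⟩
      rw [hg]
      have : (-1 : Matrix (Fin 2) (Fin 2) F) = (-1 : F) • 1 := by rw [neg_smul, one_smul]
      rw [this, detsmul, Matrix.det_one]
      ring
end

section
/- Let D₄ = ⟨a, b | a⁴ = 1, b² = 1, b a b⁻¹ = a⁻¹⟩ be the dihedral group of order 8. There is no normalized 2-cocycle c : D₄ × D₄ → {±1} satisfying: c(a², aᵏ) = 1 for all 0 ≤ k ≤ 3, c(a², aᵏ b) = −1 for all 0 ≤ k ≤ 3, and c(y, a²) = 1 for all y ∈ D₄. -/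
open DihedralGroup

/-- There is no normalized `{±1}`-valued 2-cocycle `c` on the dihedral
group `D₄` with `c(a², aᵏ) = 1`, `c(a², aᵏb) = −1` and `c(y, a²) = 1` for all `k, y`
(here `a = r 1` and the reflections are the elements `sr j`). -/
theorem stmt8 :
    ¬∃ c : DihedralGroup 4 → DihedralGroup 4 → ℤˣ,
      (∀ g : DihedralGroup 4, c 1 g = 1 ∧ c g 1 = 1) ∧
      (∀ x y z : DihedralGroup 4, c x y * c (x * y) z = c x (y * z) * c y z) ∧
      (∀ k : ZMod 4, c (r 2) (r k) = 1) ∧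
      (∀ k : ZMod 4, c (r 2) (sr k) = -1) ∧
      (∀ y : DihedralGroup 4, c y (r 2) = 1) := by
  rintro ⟨c, hnorm, hcoc, hrr, hrs, hyr2⟩
  have h1 := hcoc (r 1) (r 1) (sr 2)
  have h2 := hcoc (r 1) (sr 1) (r 1)
  have h3 := hcoc (sr 0) (r 1) (r 1)
  simp only [r_mul_r, r_mul_sr, sr_mul_r, show (1+1 : ZMod 4) = 2 by decide,
    show (2-1 : ZMod 4) = 1 by decide, show (1-1 : ZMod 4) = 0 by decide,
    show ((0:ZMod 4)+1) = 1 by decide] at h1 h2 h3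
  rw [hrs 2] at h1
  rw [hyr2 (sr 0)] at h3
  rcases Int.units_eq_one_or (c (r 1) (r 1)) with hu | hu <;>
  rcases Int.units_eq_one_or (c (r 1) (sr 1)) with hp | hp <;>
  rcases Int.units_eq_one_or (c (r 1) (sr 2)) with hq | hq <;>
  rcases Int.units_eq_one_or (c (sr 0) (r 1)) with hs | hs <;>
  rcases Int.units_eq_one_or (c (sr 1) (r 1)) with ht | ht <;>
  simp [hu, hp, hq, hs, ht] at h1 h2 h3
end

section
/- Let D₄ = ⟨a, b | a⁴ = 1, b² = 1, b a b⁻¹ = a⁻¹⟩ and let μ₄ = ⟨i⟩ ⊂ ℂ× be the group of 4th roots of unity. Define c : D₄ × D₄ → μ₄ by c(aˡ, aᵏ) = 1, c(b aˡ, aᵏ) = 1, c(aˡ, b aᵏ) = iˡ, and c(b aˡ, b aᵏ) = iˡ, for 0 ≤ k, l ≤ 3. Then c is a normalized 2-cocycle on D₄ with values in μ₄. -/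
open DihedralGroup

/-- The function `c : D₄ × D₄ → ℂ` of STATEMENT 9, with `aˡ = r l` and `b aˡ = sr l`:
`c(aˡ, aᵏ) = 1`, `c(baˡ, aᵏ) = 1`, `c(aˡ, baᵏ) = iˡ`, `c(baˡ, baᵏ) = iˡ`. -/
noncomputable def c9 : DihedralGroup 4 → DihedralGroup 4 → ℂ
  | r _, r _ => 1
  | sr _, r _ => 1
  | r l, sr _ => Complex.I ^ l.val
  | sr l, sr _ => Complex.I ^ l.val

lemma I_val_add (x y : ZMod 4) :
    Complex.I ^ (x + y).val = Complex.I ^ x.val * Complex.I ^ y.val := by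
  rw [← pow_add, ZMod.val_add]
  conv_rhs => rw [← Nat.div_add_mod (x.val + y.val) 4]
  rw [pow_add, pow_mul, Complex.I_pow_four, one_pow, one_mul]

lemma one_eq_r : (1 : DihedralGroup 4) = r 0 := rfl

/-- `c9` is a normalized 2-cocycle on `D₄` with values in `μ₄`. -/
theorem stmt9 :
    (∀ g : DihedralGroup 4, c9 1 g = 1 ∧ c9 g 1 = 1) ∧
    (∀ x y z : DihedralGroup 4, c9 x y * c9 (x * y) z = c9 x (y * z) * c9 y z) ∧
    (∀ x y : DihedralGroup 4, (c9 x y) ^ 4 = 1) := by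
  refine ⟨?_, ?_, ?_⟩
  · rintro (g | g) <;> simp [one_eq_r, c9, ZMod.val_zero, -r_zero]
  · rintro (i | i) (j | j) (k | k) <;>
      simp only [r_mul_r, r_mul_sr, sr_mul_r, sr_mul_sr, c9, one_mul, mul_one, I_val_add]
    · rw [← I_val_add, add_sub_cancel]
    · rw [← I_val_add, add_sub_cancel]
  · rintro (i | i) (j | j) <;> simp only [c9, one_pow] <;>
      rw [← pow_mul, mul_comm, pow_mul, Complex.I_pow_four, one_pow]
end

section
/- Let V = {1̇, α, β, αβ} be the Klein four-group realized as F×/(F×)² for a non-archimedean local field F with |k_F| ≡ 1 (mod 4), with α, β the classes of ζ₁ and ϖ, where ζ₁ is a root of unity of exact 2-power order 2ᵏ (k ≥ 2) and ϖ a uniformizer. Let κ : V → F× be the section κ(1̇) = 1, κ(α) = ζ₁, κ(β) = ϖ, κ(αβ) = ζ₁ϖ, and c′(x, y) = κ(x)κ(y)κ(xy)⁻¹ ∈ (F×)². Let √ : (F×)² → F× be the square-root map determined by √(ζ₁²) = ζ₁^{2^{k−1}+1}, √(ϖ²) = −ϖ, √(u²) = u for u ∈ U₁, multiplicatively extended (with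 the convention of the paper for the odd part of the roots of unity), and let c_√(x, y) = √x · √y · (√(xy))⁻¹ ∈ {±1} for x, y ∈ (F×)². Then for all a, b, c ∈ V: c_√(c′(a, b), c′(ab, c)) = c_√(c′(a, bc), c′(b, c)). -/
/-- For `F` with `Fˣ/(Fˣ)² = {1̇, ζ̇₁, ϖ̇, (ζ₁ϖ)˙}` (the local field
situation with `|k_F| ≡ 1 (mod 4)`, `ζ₁` of order `2ᵏ`, `k ≥ 2`, `ϖ` a uniformizer),
with the section `κ`, the cocycle `c′(x,y) = κ(x)κ(y)κ(xy)⁻¹`, and the square-root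
map `sq` determined by `sq(ζ₁^{2i}) = (ζ₁^{2^{k−1}+1})^i`, `sq(ϖ^{2n}) = (−ϖ)^n`
(multiplicatively on products), the `{±1}`-valued 2-cochain
`c_√(x,y) = sq(x) sq(y) sq(xy)⁻¹` satisfies
`c_√(c′(a,b), c′(ab,c)) = c_√(c′(a,bc), c′(b,c))` for all `a, b, c`. -/
theorem stmt15 {F : Type*} [Field F] (k : ℕ) (hk : 2 ≤ k)
    (ζ₁ ϖ : Fˣ) (hζ : orderOf ζ₁ = 2 ^ k)
    (Sq : Subgroup Fˣ) (hSq : Sq = (powMonoidHom 2 : Fˣ →* Fˣ).range)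
    (hcard : Nat.card (Fˣ ⧸ Sq) = 4)
    (hcover : ∀ q : Fˣ ⧸ Sq, q = 1 ∨ q = QuotientGroup.mk ζ₁ ∨
      q = QuotientGroup.mk ϖ ∨ q = QuotientGroup.mk (ζ₁ * ϖ))
    (κ : Fˣ ⧸ Sq → Fˣ)
    (hκsec : ∀ q : Fˣ ⧸ Sq, (QuotientGroup.mk (κ q) : Fˣ ⧸ Sq) = q)
    (hκ1 : κ 1 = 1)
    (hκζ : κ (QuotientGroup.mk ζ₁) = ζ₁)
    (hκϖ : κ (QuotientGroup.mk ϖ) = ϖ)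
    (hκζϖ : κ (QuotientGroup.mk (ζ₁ * ϖ)) = ζ₁ * ϖ)
    (c' : Fˣ ⧸ Sq → Fˣ ⧸ Sq → Fˣ)
    (hc' : ∀ x y : Fˣ ⧸ Sq, c' x y = κ x * κ y * (κ (x * y))⁻¹)
    (sq : Fˣ → Fˣ)
    (hsqrt : ∀ x : Fˣ, (sq (x ^ 2)) ^ 2 = x ^ 2)
    (hsqζ : ∀ i : ℕ, i < 2 ^ (k - 1) →
      sq (ζ₁ ^ (2 * i)) = (ζ₁ ^ (2 ^ (k - 1) + 1)) ^ i)
    (hsqϖ : ∀ n : ℤ, sq (ϖ ^ (2 * n)) = (-ϖ) ^ n)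
    (hsqmul : ∀ (i : ℕ) (n : ℤ), i < 2 ^ (k - 1) →
      sq (ζ₁ ^ (2 * i) * ϖ ^ (2 * n)) = sq (ζ₁ ^ (2 * i)) * sq (ϖ ^ (2 * n)))
    (csq : Fˣ → Fˣ → Fˣ)
    (hcsq : ∀ x y : Fˣ, csq x y = sq x * sq y * (sq (x * y))⁻¹) :
    ∀ a b c : Fˣ ⧸ Sq, csq (c' a b) (c' (a * b) c) = csq (c' a (b * c)) (c' b c) := by
  
  intro a b c
  have h2 : (1:ℕ) < 2 ^ (k-1) := by
    have : (2:ℕ) ≤ 2 ^ (k-1) := by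
      calc (2:ℕ) = 2 ^ 1 := rfl
      _ ≤ 2 ^ (k-1) := Nat.pow_le_pow_right (by norm_num) (by omega)
    omega
  have hmk1 : ∀ x : Fˣ, (QuotientGroup.mk (x ^ 2) : Fˣ ⧸ Sq) = 1 := by
    intro x
    rw [QuotientGroup.eq_one_iff, hSq]
    exact ⟨x, rfl⟩
  have hmksq : ∀ x y : Fˣ, (QuotientGroup.mk (x ^ 2 * y) : Fˣ ⧸ Sq) = QuotientGroup.mk y := by
    intro x y
    rw [QuotientGroup.mk_mul, hmk1]
    exact one_mul (QuotientGroup.mk y : Fˣ ⧸ Sq)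
  -- multiplication table for the quotient
  have tAA : (QuotientGroup.mk ζ₁ : Fˣ ⧸ Sq) * QuotientGroup.mk ζ₁ = 1 := by
    rw [← QuotientGroup.mk_mul, ← pow_two, hmk1]
  have tBB : (QuotientGroup.mk ϖ : Fˣ ⧸ Sq) * QuotientGroup.mk ϖ = 1 := by
    rw [← QuotientGroup.mk_mul, ← pow_two, hmk1]
  have tAB : (QuotientGroup.mk ζ₁ : Fˣ ⧸ Sq) * QuotientGroup.mk ϖ = QuotientGroup.mk (ζ₁ * ϖ) :=
    (QuotientGroup.mk_mul _ _ _).symm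
  have tBA : (QuotientGroup.mk ϖ : Fˣ ⧸ Sq) * QuotientGroup.mk ζ₁ = QuotientGroup.mk (ζ₁ * ϖ) := by
    rw [← QuotientGroup.mk_mul, mul_comm]
  have tAC : (QuotientGroup.mk ζ₁ : Fˣ ⧸ Sq) * QuotientGroup.mk (ζ₁ * ϖ) = QuotientGroup.mk ϖ := by
    rw [← QuotientGroup.mk_mul, ← mul_assoc, ← pow_two, hmksq]
  have tCA : (QuotientGroup.mk (ζ₁ * ϖ) : Fˣ ⧸ Sq) * QuotientGroup.mk ζ₁ = QuotientGroup.mk ϖ := by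
    rw [mul_comm (QuotientGroup.mk (ζ₁ * ϖ) : Fˣ ⧸ Sq), tAC]
  have tBC : (QuotientGroup.mk ϖ : Fˣ ⧸ Sq) * QuotientGroup.mk (ζ₁ * ϖ) = QuotientGroup.mk ζ₁ := by
    rw [← QuotientGroup.mk_mul]
    have : ϖ * (ζ₁ * ϖ) = ϖ ^ 2 * ζ₁ := by
      rw [mul_comm ζ₁ ϖ, ← mul_assoc, ← pow_two]
    rw [this, hmksq]
  have tCB : (QuotientGroup.mk (ζ₁ * ϖ) : Fˣ ⧸ Sq) * QuotientGroup.mk ϖ = QuotientGroup.mk ζ₁ := by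
    rw [mul_comm (QuotientGroup.mk (ζ₁ * ϖ) : Fˣ ⧸ Sq), tBC]
  have tCC : (QuotientGroup.mk (ζ₁ * ϖ) : Fˣ ⧸ Sq) * QuotientGroup.mk (ζ₁ * ϖ) = 1 := by
    rw [← QuotientGroup.mk_mul, ← pow_two, hmk1]
  have t1m : ∀ x : Fˣ ⧸ Sq, 1 * x = x := fun x => one_mul x
  have tm1 : ∀ x : Fˣ ⧸ Sq, x * 1 = x := fun x => mul_one x
  -- values of c'
  have c1 : ∀ y, c' 1 y = 1 := by
    intro y; rw [hc', hκ1, one_mul y]; simp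
  have cx1 : ∀ x, c' x 1 = 1 := by
    intro x; rw [hc', hκ1, mul_one x]; simp
  have cAA : c' (QuotientGroup.mk ζ₁) (QuotientGroup.mk ζ₁) = ζ₁ ^ 2 := by
    rw [hc', tAA, hκ1, hκζ, inv_one, mul_one, pow_two]
  have cBB : c' (QuotientGroup.mk ϖ) (QuotientGroup.mk ϖ) = ϖ ^ 2 := by
    rw [hc', tBB, hκ1, hκϖ, inv_one, mul_one, pow_two]
  have cAB : c' (QuotientGroup.mk ζ₁) (QuotientGroup.mk ϖ) = 1 := by
    rw [hc', tAB, hκζ, hκϖ, hκζϖ]; group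
  have cBA : c' (QuotientGroup.mk ϖ) (QuotientGroup.mk ζ₁) = 1 := by
    rw [hc', tBA, hκζ, hκϖ, hκζϖ, mul_comm ϖ ζ₁]; group
  have cAC : c' (QuotientGroup.mk ζ₁) (QuotientGroup.mk (ζ₁ * ϖ)) = ζ₁ ^ 2 := by
    rw [hc', tAC, hκζ, hκζϖ, hκϖ]
    rw [Units.ext_iff]
    push_cast
    field_simp
  have cCA : c' (QuotientGroup.mk (ζ₁ * ϖ)) (QuotientGroup.mk ζ₁) = ζ₁ ^ 2 := by
    rw [hc', tCA, hκζ, hκζϖ, hκϖ]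
    rw [Units.ext_iff]
    push_cast
    field_simp
  have cBC : c' (QuotientGroup.mk ϖ) (QuotientGroup.mk (ζ₁ * ϖ)) = ϖ ^ 2 := by
    rw [hc', tBC, hκζ, hκζϖ, hκϖ]
    rw [Units.ext_iff]
    push_cast
    field_simp
  have cCB : c' (QuotientGroup.mk (ζ₁ * ϖ)) (QuotientGroup.mk ϖ) = ϖ ^ 2 := by
    rw [hc', tCB, hκζ, hκζϖ, hκϖ]
    rw [Units.ext_iff]
    push_cast
    field_simp
  have cCC : c' (QuotientGroup.mk (ζ₁ * ϖ)) (QuotientGroup.mk (ζ₁ * ϖ)) = ζ₁ ^ 2 * ϖ ^ 2 := by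
    rw [hc', tCC, hκ1, hκζϖ, inv_one, mul_one]
    rw [Units.ext_iff]
    push_cast
    ring
  -- values of sq
  have s1 : sq 1 = 1 := by
    have := hsqζ 0 (by positivity)
    simpa using this
  have sZ : sq (ζ₁ ^ 2) = ζ₁ ^ (2 ^ (k-1) + 1) := by
    have := hsqζ 1 h2
    simpa using this
  have sP : sq (ϖ ^ 2) = -ϖ := by
    have := hsqϖ 1
    norm_num at this
    exact this
  have sZP : sq (ζ₁ ^ 2 * ϖ ^ 2) = ζ₁ ^ (2 ^ (k-1) + 1) * -ϖ := by
    have := hsqmul 1 1 h2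
    norm_num at this
    rw [this, sZ, sP]
  -- the product cocycle identity for c'
  have hprod : c' a b * c' (a*b) c = c' a (b*c) * c' b c := by
    rw [hc', hc', hc', hc', mul_assoc a b c]
    simp [mul_comm, mul_left_comm, mul_assoc, inv_mul_cancel_left, mul_inv_cancel_left]
  have hred : sq (c' a b) * sq (c' (a*b) c) = sq (c' a (b*c)) * sq (c' b c) := by
    rcases hcover a with ha|ha|ha|ha <;> rcases hcover b with hb|hb|hb|hb <;>
      rcases hcover c with hc|hc|hc|hc <;> subst ha hb hc <;>
      simp only [t1m, tm1, one_mul, mul_one, tAA, tBB, tAB, tBA, tAC, tCA, tBC, tCB, tCC,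
        c1, cx1, cAA, cBB, cAB, cBA, cAC, cCA, cBC, cCB, cCC, s1, sZ, sP, sZP] <;>
      (try rfl) <;> (refine Units.ext ?_) <;> push_cast <;> ring
  rw [hcsq, hcsq, hprod, hred]
end
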